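/- arXiv:1606.07052 — 3 statements merged into one kernel-verified Lean document; each statement's English description precedes it below -/
import Mathlib

section
/- Let τ, γ ∈ ℂ and let G = {τ + tγ/2 : t ∈ [−1,1]} ⊂ ℂ. Then for every λ ∈ ℂ \ G one has (τ − λ) ≠ 0 and 1 − γ²/(4(τ−λ)²) ∉ (−∞, 0], so that the standard root w(λ) = (τ − λ)·√⁺(1 − γ²/(4(τ−λ)²)) is well defined on ℂ \ G; moreover w is holomorphic on the open set ℂ \ G. -/
/-!
If `λ = τ - u` with `u ≠ 0` and `1 - γ²/(4u²) = x ≤ 0`, then `c = γ/(2u)` satisfies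
`c² = 1 - x ≥ 1`, so `c = ±s` with `s ≥ 1` real, and `λ = τ + tγ/2` for `t = ∓1/s ∈ [-1, 1]`.
Hence off the gap the argument of `√⁺` stays in the slit plane, where the principal power is
holomorphic, and `w` is a composition of holomorphic maps.
-/

/-- The gap `G = {τ + tγ/2 : t ∈ [−1,1]} ⊂ ℂ`. -/
def gap (τ γ : ℂ) : Set ℂ :=
  {z : ℂ | ∃ t : ℝ, t ∈ Set.Icc (-1 : ℝ) 1 ∧ z = τ + (t : ℂ) * γ / 2}

/-- The standard root `w(λ) = (τ − λ) √⁺(1 − γ²/(4(τ−λ)²))`, where `√⁺` is the principal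
branch of the square root (given by the principal complex power `z ^ (1/2)`). -/
noncomputable def stdRoot (τ γ lam : ℂ) : ℂ :=
  (τ - lam) * (1 - γ ^ 2 / (4 * (τ - lam) ^ 2)) ^ ((1 : ℂ) / 2)

/-- The negative real ray `(−∞, 0]` viewed as a subset of `ℂ`. -/
def negRay : Set ℂ := {z : ℂ | ∃ x : ℝ, x ≤ 0 ∧ z = (x : ℂ)}

open Complex Set
open scoped ComplexOrder

lemma negRay_eq_Iic_zero : negRay = Iic 0 := by
  ext z
  constructor
  · rintro ⟨x, hx, rfl⟩
    exact mem_Iic.2 (by exact_mod_cast hx)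
  · intro hz
    obtain ⟨hre, him⟩ := nonpos_iff.1 hz
    exact ⟨z.re, hre, ext rfl (by simpa using him)⟩

lemma compl_negRay : negRayᶜ = slitPlane := by
  rw [negRay_eq_Iic_zero, Complex.compl_Iic_zero]

lemma gap_eq_image (τ γ : ℂ) :
    gap τ γ = (fun t : ℝ => τ + (t : ℂ) * γ / 2) '' Icc (-1) 1 := by
  ext z
  simp [gap, eq_comm]

lemma isCompact_gap (τ γ : ℂ) : IsCompact (gap τ γ) := by
  rw [gap_eq_image]
  exact isCompact_Icc.image (by fun_prop)

lemma self_mem_gap (τ γ : ℂ) : τ ∈ gap τ γ :=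
  ⟨0, by norm_num, by simp⟩

lemma exists_mem_Icc_mul_eq_one_of_sq_eq {c : ℂ} {r : ℝ} (hr : 1 ≤ r) (hc : c ^ 2 = r) :
    ∃ t ∈ Icc (-1 : ℝ) 1, (t : ℂ) * c = 1 := by
  set s := √r
  have hs : 1 ≤ s := Real.one_le_sqrt.2 hr
  have hs0 : (s : ℂ) ≠ 0 := by exact_mod_cast (zero_lt_one.trans_le hs).ne'
  have hsq : c ^ 2 = (s : ℂ) ^ 2 := by
    rw [hc]
    exact_mod_cast (Real.sq_sqrt (zero_le_one.trans hr)).symm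
  have hinv : |s⁻¹| ≤ 1 := by
    rw [abs_inv, abs_of_pos (zero_lt_one.trans_le hs)]
    exact inv_le_one_of_one_le₀ hs
  rcases sq_eq_sq_iff_eq_or_eq_neg.1 hsq with rfl | rfl
  · exact ⟨s⁻¹, abs_le.1 hinv, by push_cast; field_simp⟩
  · exact ⟨-s⁻¹, abs_le.1 (by rwa [abs_neg]), by push_cast; field_simp⟩

lemma mem_gap_of_mem_negRay {τ γ lam : ℂ} (h0 : τ - lam ≠ 0)
    (h : 1 - γ ^ 2 / (4 * (τ - lam) ^ 2) ∈ negRay) : lam ∈ gap τ γ := by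
  obtain ⟨x, hx, hxeq⟩ := h
  have hsq : (γ / (2 * (τ - lam))) ^ 2 = ((1 - x : ℝ) : ℂ) := by
    push_cast
    rw [← hxeq, div_pow, mul_pow]
    ring
  obtain ⟨t, ht, htc⟩ := exists_mem_Icc_mul_eq_one_of_sq_eq (by linarith) hsq
  refine ⟨-t, ⟨by linarith [ht.2], by linarith [ht.1]⟩, ?_⟩
  field_simp at htc
  push_cast
  linear_combination htc / 2

lemma sub_ne_zero_of_notMem_gap {τ γ lam : ℂ} (h : lam ∉ gap τ γ) : τ - lam ≠ 0 := by
  rw [sub_ne_zero]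
  rintro rfl
  exact h (self_mem_gap τ γ)

lemma differentiableAt_stdRoot {τ γ lam : ℂ} (h0 : τ - lam ≠ 0)
    (h : 1 - γ ^ 2 / (4 * (τ - lam) ^ 2) ∈ slitPlane) :
    DifferentiableAt ℂ (stdRoot τ γ) lam := by
  have hden : 4 * (τ - lam) ^ 2 ≠ 0 := mul_ne_zero (by norm_num) (pow_ne_zero 2 h0)
  have harg : DifferentiableAt ℂ (fun z => 1 - γ ^ 2 / (4 * (τ - z) ^ 2)) lam :=
    (differentiableAt_const _).sub ((differentiableAt_const _).div (by fun_prop) hden)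
  exact (differentiableAt_id.const_sub τ).mul (harg.cpow (differentiableAt_const _) h)

/-- For every `λ ∈ ℂ \ G` one has `τ − λ ≠ 0` and `1 − γ²/(4(τ−λ)²) ∉ (−∞,0]`, so the
standard root `w(λ) = (τ−λ)·√⁺(1 − γ²/(4(τ−λ)²))` is well defined on `ℂ \ G`; moreover
`ℂ \ G` is open and `w` is holomorphic on it. -/
theorem stdRoot_welldefined_holomorphic (τ γ : ℂ) :
    (∀ lam : ℂ, lam ∉ gap τ γ →
      τ - lam ≠ 0 ∧ (1 - γ ^ 2 / (4 * (τ - lam) ^ 2)) ∉ negRay) ∧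
    IsOpen (gap τ γ)ᶜ ∧
    DifferentiableOn ℂ (stdRoot τ γ) (gap τ γ)ᶜ := by
  have hwd : ∀ lam : ℂ, lam ∉ gap τ γ →
      τ - lam ≠ 0 ∧ (1 - γ ^ 2 / (4 * (τ - lam) ^ 2)) ∉ negRay := fun lam h =>
    have h0 := sub_ne_zero_of_notMem_gap h
    ⟨h0, fun hray => h (mem_gap_of_mem_negRay h0 hray)⟩
  refine ⟨hwd, (isCompact_gap τ γ).isClosed.isOpen_compl, fun lam hlam => ?_⟩
  obtain ⟨h0, hray⟩ := hwd lam hlam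
  have hslit : 1 - γ ^ 2 / (4 * (τ - lam) ^ 2) ∈ slitPlane := compl_negRay ▸ hray
  exact (differentiableAt_stdRoot h0 hslit).differentiableWithinAt
end

section
/- Let τ ∈ ℂ and γ ∈ ℂ with γ ≠ 0, and let w(λ) = (τ−λ)·√⁺(1 − γ²/(4(τ−λ)²)) be the standard root, defined off the gap G = {τ + tγ/2 : t ∈ [−1,1]}. Then for every t ∈ (−1,1): lim_{ε→0⁺} w(τ + (t + iε)·γ/2) = −i·(γ/2)·√(1 − t²) and lim_{ε→0⁺} w(τ + (t − iε)·γ/2) = +i·(γ/2)·√(1 − t²). In particular, the boundary values of w on the two sides of the gap G are negatives of each other. -/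
/-!
Put `λ = τ + zγ/2`, so that `w(λ) = -(γ/2) · z √⁺(1 - z⁻²)`. The factor `√⁺(1 - z⁻²)` is
discontinuous across the gap (there `1 - z⁻² = 1 - 1/t² < 0`), but on the upper half-plane
`z √⁺(1 - z⁻²) = i √⁺(1 - z²)`: both sides are continuous with the same square `z² - 1`, the right
side never vanishes, the half-plane is connected, and they agree at `z = i`. The right side is
continuous up to `(-1, 1)`, where it tends to `i √(1 - t²)`; the lower half-plane follows from
`z ↦ -z`.
-/

open Complex Filter Set Topology

namespace Complex

lemma one_sub_sq_mem_slitPlane {z : ℂ} (hz : z.im ≠ 0) : 1 - z ^ 2 ∈ slitPlane := by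
  rw [mem_slitPlane_iff]
  by_cases hre : z.re = 0
  · left
    simp only [sub_re, one_re, sq, mul_re, hre]
    nlinarith [sq_nonneg z.im]
  · right
    simp only [sub_im, one_im, sq, mul_im]
    intro h
    have : z.re * z.im = 0 := by linarith
    exact (mul_ne_zero hre hz) this

lemma mul_cpow_one_sub_inv_sq_of_im_pos {z : ℂ} (hz : 0 < z.im) :
    z * (1 - z⁻¹ ^ 2) ^ ((1 : ℂ) / 2) = I * (1 - z ^ 2) ^ ((1 : ℂ) / 2) := by
  have hne : ∀ {w : ℂ}, 0 < w.im → w ≠ 0 := fun hw h => by simp [h] at hw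
  have hslit : ∀ {w : ℂ}, 0 < w.im → 1 - w ^ 2 ∈ slitPlane := fun hw =>
    one_sub_sq_mem_slitPlane hw.ne'
  have hslit_inv : ∀ {w : ℂ}, 0 < w.im → 1 - w⁻¹ ^ 2 ∈ slitPlane := fun hw =>
    one_sub_sq_mem_slitPlane (by simp [inv_im, hne hw, hw.ne'])
  refine (convex_halfSpace_im_gt 0).isPreconnected.eq_of_sq_eq
    (f := fun w => w * (1 - w⁻¹ ^ 2) ^ ((1 : ℂ) / 2)) (g := fun w => I * (1 - w ^ 2) ^ ((1 : ℂ) / 2))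
    ?_ ?_ ?_ ?_ (y := I) (by simp) (by norm_num) hz
  · refine fun w hw => (continuousAt_id.mul ?_).continuousWithinAt
    exact ((continuousAt_const.sub ((continuousAt_inv₀ (hne hw)).pow 2)).cpow
      continuousAt_const (hslit_inv hw))
  · refine fun w hw => (continuousAt_const.mul ?_).continuousWithinAt
    exact (continuousAt_const.sub (continuousAt_pow w 2)).cpow continuousAt_const (hslit hw)
  · intro w hw
    have hw0 := hne hw
    simp only [Pi.pow_apply, mul_pow, one_div, cpow_ofNat_inv_pow, I_sq]
    field_simp
    ring
  · intro w hw
    refine mul_ne_zero I_ne_zero ?_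
    rw [Ne, cpow_eq_zero_iff]
    exact fun h => slitPlane_ne_zero (hslit hw) h.1

lemma mul_cpow_one_sub_inv_sq_of_im_neg {z : ℂ} (hz : z.im < 0) :
    z * (1 - z⁻¹ ^ 2) ^ ((1 : ℂ) / 2) = -(I * (1 - z ^ 2) ^ ((1 : ℂ) / 2)) := by
  have hneg := mul_cpow_one_sub_inv_sq_of_im_pos (z := -z) (by simpa using hz)
  rw [inv_neg, neg_sq, neg_sq, neg_mul] at hneg
  exact neg_eq_iff_eq_neg.mp hneg

lemma tendsto_cpow_one_sub_sq {l : Filter ℝ} {f : ℝ → ℂ} {t : ℝ} (ht : t ∈ Ioo (-1 : ℝ) 1)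
    (hf : Tendsto f l (𝓝 t)) :
    Tendsto (fun x => (1 - f x ^ 2) ^ ((1 : ℂ) / 2)) l (𝓝 (Real.sqrt (1 - t ^ 2) : ℂ)) := by
  have hpos : 0 < 1 - t ^ 2 := by nlinarith [ht.1, ht.2]
  have hlim : ((Real.sqrt (1 - t ^ 2) : ℝ) : ℂ) = ((1 - t ^ 2 : ℝ) : ℂ) ^ ((1 : ℂ) / 2) := by
    rw [Real.sqrt_eq_rpow, ofReal_cpow hpos.le]
    norm_num
  rw [hlim]
  have hbase : Tendsto (fun x => 1 - f x ^ 2) l (𝓝 ((1 - t ^ 2 : ℝ) : ℂ)) := by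
    simpa using tendsto_const_nhds.sub (hf.pow 2)
  exact hbase.cpow tendsto_const_nhds (ofReal_mem_slitPlane.mpr hpos)

end Complex

lemma stdRoot_add_mul_half (τ : ℂ) {γ : ℂ} (hγ : γ ≠ 0) (z : ℂ) :
    stdRoot τ γ (τ + z * γ / 2) = -(γ / 2) * (z * (1 - z⁻¹ ^ 2) ^ ((1 : ℂ) / 2)) := by
  have hfrac : γ ^ 2 / (4 * (τ - (τ + z * γ / 2)) ^ 2) = z⁻¹ ^ 2 := by
    rcases eq_or_ne z 0 with rfl | hz
    · simp
    · field_simp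
      ring
  rw [stdRoot, hfrac]
  ring

/-- Boundary values of the standard root on the two sides of the gap: for `t ∈ (−1,1)`,
`w(τ + (t ± iε)γ/2) → ∓ i (γ/2) √(1 − t²)` as `ε → 0⁺`. In particular the boundary values
on the two sides of the gap are negatives of each other. -/
theorem stdRoot_boundary_values (τ γ : ℂ) (hγ : γ ≠ 0) (t : ℝ)
    (ht : t ∈ Set.Ioo (-1 : ℝ) 1) :
    Filter.Tendsto (fun ε : ℝ => stdRoot τ γ (τ + ((t : ℂ) + (ε : ℂ) * Complex.I) * γ / 2))
      (nhdsWithin 0 (Set.Ioi 0))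
      (nhds (-Complex.I * (γ / 2) * (Real.sqrt (1 - t ^ 2) : ℂ))) ∧
    Filter.Tendsto (fun ε : ℝ => stdRoot τ γ (τ + ((t : ℂ) - (ε : ℂ) * Complex.I) * γ / 2))
      (nhdsWithin 0 (Set.Ioi 0))
      (nhds (Complex.I * (γ / 2) * (Real.sqrt (1 - t ^ 2) : ℂ))) := by
  have hside : ∀ s : ℂ, Tendsto (fun ε : ℝ => (t : ℂ) + ε * s) (𝓝[>] 0) (𝓝 t) := fun s =>
    tendsto_nhdsWithin_of_tendsto_nhds
      ((by fun_prop : Continuous fun ε : ℝ => (t : ℂ) + ε * s).tendsto' 0 _ (by simp))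
  constructor
  · refine ((tendsto_cpow_one_sub_sq ht (hside I)).const_mul (-I * (γ / 2))).congr' ?_
    filter_upwards [self_mem_nhdsWithin] with ε (hε : 0 < ε)
    rw [stdRoot_add_mul_half τ hγ, mul_cpow_one_sub_inv_sq_of_im_pos (by simpa using hε)]
    ring
  · refine ((tendsto_cpow_one_sub_sq ht (hside (-I))).const_mul (I * (γ / 2))).congr' ?_
    filter_upwards [self_mem_nhdsWithin] with ε (hε : 0 < ε)
    rw [mul_neg, ← sub_eq_add_neg, stdRoot_add_mul_half τ hγ,
      mul_cpow_one_sub_inv_sq_of_im_neg (by simpa using hε)]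
    ring
end

section
/- Let τ ∈ ℂ, γ ∈ ℂ, and R > |γ|/2, and let w(λ) = (τ−λ)·√⁺(1 − γ²/(4(τ−λ)²)) be the standard root, holomorphic off the gap G = {τ + tγ/2 : t ∈ [−1,1]}. Then ∮_{|λ−τ|=R} w(λ) dλ = iπγ²/4, where the integral is over the counterclockwise circle of radius R centered at τ. -/
/-!
Outside the gap `w` is holomorphic, so the integral does not change when the radius grows.
Near infinity the Taylor expansion `√⁺(1 - u) = 1 - u/2 + O(|u|²)`, whose error is at most
`|u|²/2` because `√⁺` takes values in the right half-plane, gives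
`w(λ) = (τ - λ) + γ²/(8(λ - τ)) + O(|λ - τ|⁻³)`. The polynomial part integrates to `0`, the
simple pole to `2πi · γ²/8`, and the remainder contributes `O(1/R)`, which tends to `0`.
-/

open Complex Metric Filter Topology Real

lemma Complex.norm_one_sub_cpow_half_sub_le (u : ℂ) :
    ‖(1 - u) ^ (1 / 2 : ℂ) - (1 - u / 2)‖ ≤ ‖u‖ ^ 2 / 2 := by
  set s := (1 - u) ^ (1 / 2 : ℂ)
  have hs_sq : s ^ 2 = 1 - u := by simp [s, one_div]
  have hs_re : 0 ≤ s.re := by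
    simp only [s, one_div, cpow_inv_two_re]
    exact Real.sqrt_nonneg _
  have hs_one : 1 ≤ ‖s + 1‖ :=
    calc 1 ≤ (s + 1).re := by simp only [add_re, one_re]; linarith
      _ ≤ ‖s + 1‖ := re_le_norm _
  have hs_ne : s + 1 ≠ 0 := norm_pos_iff.mp (by linarith)
  -- `s - 1 = -u / (s + 1)`, so the error is `-(s - 1)² / 2`
  have h_err : s - (1 - u / 2) = -u ^ 2 / (2 * (s + 1) ^ 2) := by
    have hu : u = 1 - s ^ 2 := by rw [hs_sq]; ring
    rw [hu]
    field_simp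
    ring
  rw [h_err, norm_div, norm_neg, norm_mul, norm_pow, norm_pow, Complex.norm_two]
  exact div_le_div_of_nonneg_left (by positivity) two_pos (by nlinarith)

lemma Complex.exists_ofReal_of_one_sub_sq_notMem_slitPlane {v : ℂ}
    (hv : 1 - v ^ 2 ∉ slitPlane) : ∃ t : ℝ, 1 ≤ |t| ∧ v = t := by
  rw [mem_slitPlane_iff, not_or, not_lt] at hv
  obtain ⟨hre, him⟩ := hv
  simp only [sub_re, one_re, sub_im, one_im, zero_sub, neg_eq_zero, not_not] at hre him
  have hr : 1 ≤ (v ^ 2).re := by linarith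
  have hsq : v ^ 2 = ((√(v ^ 2).re : ℝ) : ℂ) ^ 2 := by
    rw [← ofReal_pow, Real.sq_sqrt (by linarith)]
    exact Complex.ext rfl (by simpa using him)
  have h1 : 1 ≤ √(v ^ 2).re := Real.one_le_sqrt.mpr hr
  rcases sq_eq_sq_iff_eq_or_eq_neg.mp hsq with h | h
  · exact ⟨_, by rwa [abs_of_nonneg (by linarith)], h⟩
  · exact ⟨-√(v ^ 2).re, by rwa [abs_neg, abs_of_nonneg (by linarith)], by simpa using h⟩

lemma gap_subset_ball {τ γ : ℂ} {r : ℝ} (hr : ‖γ‖ / 2 < r) : gap τ γ ⊆ ball τ r := by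
  rintro z ⟨t, ⟨ht₁, ht₂⟩, rfl⟩
  rw [mem_ball_iff_norm, add_sub_cancel_left, norm_div, norm_mul, norm_real, Real.norm_eq_abs,
    Complex.norm_two]
  have : |t| ≤ 1 := abs_le.mpr ⟨ht₁, ht₂⟩
  nlinarith [norm_nonneg γ]

lemma ne_of_notMem_gap {τ γ z : ℂ} (hz : z ∉ gap τ γ) : z ≠ τ :=
  fun h => hz ⟨0, by norm_num, by simp [h]⟩

lemma one_sub_div_mem_slitPlane_of_notMem_gap {τ γ z : ℂ} (hz : z ∉ gap τ γ) :
    1 - γ ^ 2 / (4 * (τ - z) ^ 2) ∈ slitPlane := by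
  have hτz : τ - z ≠ 0 := sub_ne_zero.mpr (ne_of_notMem_gap hz).symm
  by_contra h
  rw [show γ ^ 2 / (4 * (τ - z) ^ 2) = (γ / (2 * (τ - z))) ^ 2 by
    rw [div_pow, mul_pow]; norm_num] at h
  obtain ⟨t, ht, hv⟩ := exists_ofReal_of_one_sub_sq_notMem_slitPlane h
  have ht₀ : (t : ℂ) ≠ 0 := ofReal_ne_zero.mpr (abs_pos.mp (by linarith))
  have ht_inv : |-t⁻¹| ≤ 1 := by rw [abs_neg, abs_inv]; exact inv_le_one_of_one_le₀ ht
  refine hz ⟨-t⁻¹, abs_le.mp ht_inv, ?_⟩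
  rw [div_eq_iff (mul_ne_zero two_ne_zero hτz)] at hv
  push_cast
  field_simp
  linear_combination hv

lemma differentiableAt_stdRoot_s9 {τ γ z : ℂ} (hz : z ∉ gap τ γ) :
    DifferentiableAt ℂ (stdRoot τ γ) z := by
  have hτz : τ - z ≠ 0 := sub_ne_zero.mpr (ne_of_notMem_gap hz).symm
  have h_base : DifferentiableAt ℂ (fun w => 1 - γ ^ 2 / (4 * (τ - w) ^ 2)) z := by
    fun_prop (disch := simp [hτz])
  exact (differentiableAt_id.const_sub τ).mul
    (h_base.cpow (differentiableAt_const _) (one_sub_div_mem_slitPlane_of_notMem_gap hz))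

lemma norm_stdRoot_sub_le {τ γ z : ℂ} (hz : z ≠ τ) :
    ‖stdRoot τ γ z - ((τ - z) + γ ^ 2 / 8 * (z - τ)⁻¹)‖ ≤ ‖γ‖ ^ 4 / (32 * ‖z - τ‖ ^ 3) := by
  set u := γ ^ 2 / (4 * (τ - z) ^ 2)
  have h_eq : stdRoot τ γ z - ((τ - z) + γ ^ 2 / 8 * (z - τ)⁻¹)
      = (τ - z) * ((1 - u) ^ (1 / 2 : ℂ) - (1 - u / 2)) := by
    have hzτ : z - τ ≠ 0 := sub_ne_zero.mpr hz
    have hτz : τ - z ≠ 0 := sub_ne_zero.mpr hz.symm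
    rw [stdRoot]
    generalize (1 - u) ^ (1 / 2 : ℂ) = s
    simp only [u]
    field_simp
    ring
  have hu : ‖u‖ = ‖γ‖ ^ 2 / (4 * ‖z - τ‖ ^ 2) := by
    rw [norm_div, norm_mul, norm_pow, norm_pow, norm_sub_rev, RCLike.norm_ofNat]
  have hr : 0 < ‖z - τ‖ := norm_pos_iff.mpr (sub_ne_zero.mpr hz)
  rw [h_eq, norm_mul, norm_sub_rev]
  calc ‖z - τ‖ * ‖(1 - u) ^ (1 / 2 : ℂ) - (1 - u / 2)‖ ≤ ‖z - τ‖ * (‖u‖ ^ 2 / 2) :=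
        mul_le_mul_of_nonneg_left (norm_one_sub_cpow_half_sub_le u) hr.le
    _ = ‖γ‖ ^ 4 / (32 * ‖z - τ‖ ^ 3) := by rw [hu]; field_simp; ring

section CircleIntegral

variable {E : Type*} [NormedAddCommGroup E] [NormedSpace ℂ E]

theorem circleIntegral_eq_zero_of_norm_le_div_sq {f : ℂ → E} {c : ℂ} {R C : ℝ} (hR : 0 < R)
    (hf : DifferentiableOn ℂ f (ball c R)ᶜ) (hbound : ∀ z, R ≤ ‖z - c‖ → ‖f z‖ ≤ C / ‖z - c‖ ^ 2) :
    ∮ z in C(c, R), f z = 0 := by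
  have h_indep : ∀ r, R ≤ r → ∮ z in C(c, r), f z = ∮ z in C(c, R), f z := fun r hr =>
    circleIntegral_eq_of_differentiable_on_annulus_off_countable hR hr Set.countable_empty
      (hf.continuousOn.mono fun _ hz => hz.2)
      fun _ hz => (hf.mono (Set.compl_subset_compl.mpr ball_subset_closedBall)).differentiableAt
        (isClosed_closedBall.isOpen_compl.mem_nhds hz.1.2)
  have h_le : ∀ r, R ≤ r → ‖∮ z in C(c, R), f z‖ ≤ 2 * π * C / r := fun r hr => by
    have hr₀ : 0 < r := hR.trans_le hr
    rw [← h_indep r hr]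
    calc ‖∮ z in C(c, r), f z‖ ≤ 2 * π * r * (C / r ^ 2) :=
          circleIntegral.norm_integral_le_of_norm_le_const hr₀.le fun z hz => by
            rw [mem_sphere_iff_norm] at hz
            exact hz ▸ hbound z (hz ▸ hr)
      _ = 2 * π * C / r := by field_simp
  have h_lim : Tendsto (fun r : ℝ => 2 * π * C / r) atTop (𝓝 0) :=
    tendsto_const_nhds.div_atTop tendsto_id
  exact norm_le_zero_iff.mp (ge_of_tendsto h_lim (eventually_atTop.mpr ⟨R, h_le⟩))

theorem circleIntegral_eq_of_norm_sub_le_div_sq {f g : ℂ → E} {c : ℂ} {R C : ℝ} (hR : 0 < R)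
    (hf : DifferentiableOn ℂ f (ball c R)ᶜ) (hg : DifferentiableOn ℂ g (ball c R)ᶜ)
    (hbound : ∀ z, R ≤ ‖z - c‖ → ‖f z - g z‖ ≤ C / ‖z - c‖ ^ 2) :
    ∮ z in C(c, R), f z = ∮ z in C(c, R), g z := by
  have h_sphere : sphere c R ⊆ (ball c R)ᶜ := fun z hz => by simp [mem_sphere.mp hz]
  rw [← sub_eq_zero, ← circleIntegral.integral_sub
    ((hf.continuousOn.mono h_sphere).circleIntegrable hR.le)
    ((hg.continuousOn.mono h_sphere).circleIntegrable hR.le)]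
  exact circleIntegral_eq_zero_of_norm_le_div_sq hR (hf.sub hg) hbound

end CircleIntegral

lemma circleIntegral_center_sub_add_mul_inv (c a : ℂ) {R : ℝ} (hR : R ≠ 0) :
    ∮ z in C(c, R), ((c - z) + a * (z - c)⁻¹) = 2 * π * I * a := by
  have h_lin : CircleIntegrable (fun z => c - z) c R :=
    (continuous_const.sub continuous_id).continuousOn.circleIntegrable'
  have h_inv : CircleIntegrable (fun z => a * (z - c)⁻¹) c R :=
    (circleIntegrable_sub_inv_iff.mpr (.inr (by simpa using (abs_pos.mpr hR).ne))).const_mul a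
  have h_zero : ∮ z in C(c, R), (c - z) = 0 := by
    simp_rw [show ∀ z, c - z = -1 * (z - c) ^ (1 : ℤ) by simp]
    rw [circleIntegral.integral_const_mul,
      circleIntegral.integral_sub_zpow_of_ne (by decide), mul_zero]
  rw [circleIntegral.integral_add h_lin h_inv, h_zero, circleIntegral.integral_const_mul,
    circleIntegral.integral_sub_center_inv c hR]
  ring

/-- For `R > |γ|/2`, the counterclockwise contour integral of the standard root over the
circle of radius `R` centered at `τ` equals `iπγ²/4`. -/
theorem circleIntegral_stdRoot (τ γ : ℂ) (R : ℝ) (hR : ‖γ‖ / 2 < R) :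
    (∮ z in C(τ, R), stdRoot τ γ z) = Complex.I * (Real.pi : ℂ) * γ ^ 2 / 4 := by
  have hR₀ : 0 < R := (by positivity : 0 ≤ ‖γ‖ / 2).trans_lt hR
  have h_ne : ∀ z, R ≤ ‖z - τ‖ → z ≠ τ := fun z hz =>
    sub_ne_zero.mp (norm_pos_iff.mp (hR₀.trans_le hz))
  have h_root : DifferentiableOn ℂ (stdRoot τ γ) (ball τ R)ᶜ := fun z hz =>
    (differentiableAt_stdRoot_s9 fun hg => hz (gap_subset_ball hR hg)).differentiableWithinAt
  have h_principal :
      DifferentiableOn ℂ (fun z => (τ - z) + γ ^ 2 / 8 * (z - τ)⁻¹) (ball τ R)ᶜ := fun z hz => by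
    have : z - τ ≠ 0 := sub_ne_zero.mpr (h_ne z (by simpa [dist_eq_norm] using hz))
    fun_prop (disch := exact this)
  have h_tail : ∀ z, R ≤ ‖z - τ‖ →
      ‖stdRoot τ γ z - ((τ - z) + γ ^ 2 / 8 * (z - τ)⁻¹)‖ ≤ ‖γ‖ ^ 4 / (32 * R) / ‖z - τ‖ ^ 2 :=
    fun z hz => by
      have hr : 0 < ‖z - τ‖ := hR₀.trans_le hz
      refine (norm_stdRoot_sub_le (h_ne z hz)).trans ?_
      rw [div_div, pow_succ' _ 2, ← mul_assoc]
      gcongr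
  rw [circleIntegral_eq_of_norm_sub_le_div_sq hR₀ h_root h_principal h_tail,
    circleIntegral_center_sub_add_mul_inv τ _ hR₀.ne']
  ring
end
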